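/- On a generalized (κ,μ,ν)-space form M^{2n+1}(f₁,…,f₈) with h ≠ 0, h symmetric and hφ + φh = 0, the Weyl tensor satisfies W(X,ξ)ξ = (2(1−n)/(2n−1))(f₆hX + f₈φhX) for every vector field X orthogonal to ξ. -/
import Mathlib


open scoped RealInnerProductSpace

namespace KMNSpaceForm

variable {V : Type*} [NormedAddCommGroup V] [InnerProductSpace ℝ V] [FiniteDimensional ℝ V]

/-- Pointwise data and axioms of an almost contact metric structure `(φ, ξ, η, g)`
together with the tensor `h = (1/2) L_ξ φ`. -/
structure ACS (V : Type*) [NormedAddCommGroup V] [InnerProductSpace ℝ V] where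
  phi : V →ₗ[ℝ] V
  xi : V
  eta : V →ₗ[ℝ] ℝ
  h : V →ₗ[ℝ] V
  eta_xi : eta xi = 1
  phi_phi : ∀ X : V, phi (phi X) = -X + eta X • xi
  metric : ∀ X Y : V, ⟪phi X, phi Y⟫ = ⟪X, Y⟫ - eta X * eta Y
  eta_eq : ∀ X : V, eta X = ⟪X, xi⟫

/-- The algebraic properties of `h` valid on any contact metric manifold:
`h` is symmetric, `hξ = 0`, `hφ + φh = 0` and `η ∘ h = 0`. -/
def ACS.ContactProps (S : ACS V) : Prop :=
  (∀ X Y : V, ⟪S.h X, Y⟫ = ⟪X, S.h Y⟫) ∧ S.h S.xi = 0 ∧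
    (∀ X : V, S.h (S.phi X) + S.phi (S.h X) = 0) ∧ (∀ X : V, S.eta (S.h X) = 0)

/-- `R₁(X,Y)Z = g(Y,Z)X − g(X,Z)Y`. -/
def R1 (X Y Z : V) : V := ⟪Y, Z⟫ • X - ⟪X, Z⟫ • Y

/-- `R₂(X,Y)Z = g(X,φZ)φY − g(Y,φZ)φX + 2g(X,φY)φZ`. -/
def ACS.R2 (S : ACS V) (X Y Z : V) : V :=
  ⟪X, S.phi Z⟫ • S.phi Y - ⟪Y, S.phi Z⟫ • S.phi X + (2 * ⟪X, S.phi Y⟫) • S.phi Z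

/-- `R₃(X,Y)Z = η(X)η(Z)Y − η(Y)η(Z)X + g(X,Z)η(Y)ξ − g(Y,Z)η(X)ξ`. -/
def ACS.R3 (S : ACS V) (X Y Z : V) : V :=
  (S.eta X * S.eta Z) • Y - (S.eta Y * S.eta Z) • X
    + (⟪X, Z⟫ * S.eta Y) • S.xi - (⟪Y, Z⟫ * S.eta X) • S.xi

/-- `R₄(X,Y)Z = g(hY,Z)hX − g(hX,Z)hY + g(φhX,Z)φhY − g(φhY,Z)φhX`. -/
def ACS.R4 (S : ACS V) (X Y Z : V) : V :=
  ⟪S.h Y, Z⟫ • S.h X - ⟪S.h X, Z⟫ • S.h Y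
    + ⟪S.phi (S.h X), Z⟫ • S.phi (S.h Y) - ⟪S.phi (S.h Y), Z⟫ • S.phi (S.h X)

/-- `R₅(X,Y)Z = g(Y,Z)hX − g(X,Z)hY + g(hY,Z)X − g(hX,Z)Y`. -/
def ACS.R5 (S : ACS V) (X Y Z : V) : V :=
  ⟪Y, Z⟫ • S.h X - ⟪X, Z⟫ • S.h Y + ⟪S.h Y, Z⟫ • X - ⟪S.h X, Z⟫ • Y

/-- `R₆(X,Y)Z = η(X)η(Z)hY − η(Y)η(Z)hX + g(hX,Z)η(Y)ξ − g(hY,Z)η(X)ξ`. -/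
def ACS.R6 (S : ACS V) (X Y Z : V) : V :=
  (S.eta X * S.eta Z) • S.h Y - (S.eta Y * S.eta Z) • S.h X
    + (⟪S.h X, Z⟫ * S.eta Y) • S.xi - (⟪S.h Y, Z⟫ * S.eta X) • S.xi

/-- `R₇(X,Y)Z = g(Y,Z)φhX − g(X,Z)φhY + g(φhY,Z)X − g(φhX,Z)Y`. -/
def ACS.R7 (S : ACS V) (X Y Z : V) : V :=
  ⟪Y, Z⟫ • S.phi (S.h X) - ⟪X, Z⟫ • S.phi (S.h Y)
    + ⟪S.phi (S.h Y), Z⟫ • X - ⟪S.phi (S.h X), Z⟫ • Y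

/-- `R₈(X,Y)Z = η(X)η(Z)φhY − η(Y)η(Z)φhX + g(φhX,Z)η(Y)ξ − g(φhY,Z)η(X)ξ`. -/
def ACS.R8 (S : ACS V) (X Y Z : V) : V :=
  (S.eta X * S.eta Z) • S.phi (S.h Y) - (S.eta Y * S.eta Z) • S.phi (S.h X)
    + (⟪S.phi (S.h X), Z⟫ * S.eta Y) • S.xi - (⟪S.phi (S.h Y), Z⟫ * S.eta X) • S.xi

/-- The `(κ,μ,ν)` condition:
`R(X,Y)ξ = κ{η(Y)X − η(X)Y} + μ{η(Y)hX − η(X)hY} + ν{η(Y)φhX − η(X)φhY}`. -/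
def ACS.KMN (S : ACS V) (R : V → V → V → V) (κ μ ν : ℝ) : Prop :=
  ∀ X Y : V,
    R X Y S.xi =
      κ • (S.eta Y • X - S.eta X • Y) + μ • (S.eta Y • S.h X - S.eta X • S.h Y)
        + ν • (S.eta Y • S.phi (S.h X) - S.eta X • S.phi (S.h Y))

/-- Algebraic symmetries of a Riemann curvature tensor. -/
def CurvSymm (R : V → V → V → V) : Prop :=
  (∀ X Y Z : V, R X Y Z = - R Y X Z) ∧
    (∀ X Y Z W : V, ⟪R X Y Z, W⟫ = - ⟪R X Y W, Z⟫) ∧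
    (∀ X Y Z W : V, ⟪R X Y Z, W⟫ = ⟪R Z W X, Y⟫) ∧
    (∀ X Y Z : V, R X Y Z + R Y Z X + R Z X Y = 0)

/-- `Q` is the Ricci operator of `R`: `g(QX,Y) = Σₖ g(R(eₖ,X)Y,eₖ)`. -/
def IsRicci {ι : Type*} [Fintype ι] (b : OrthonormalBasis ι ℝ V) (R : V → V → V → V)
    (Q : V →ₗ[ℝ] V) : Prop :=
  ∀ X Y : V, ⟪Q X, Y⟫ = ∑ i, ⟪R (b i) X Y, b i⟫

/-- `F` is the (pointwise constant) `φ`-sectional curvature of `R`: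
`F = R(X,φX,φX,X)` for every unit `X ⟂ ξ`. -/
def ACS.IsPhiSec (S : ACS V) (R : V → V → V → V) (F : ℝ) : Prop :=
  ∀ X : V, ‖X‖ = 1 → ⟪X, S.xi⟫ = 0 → ⟪R X (S.phi X) (S.phi X), X⟫ = F


section Aux
set_option linter.unusedSectionVars false

variable {ι : Type*} [Fintype ι]

lemma ACS.inner_xi_xi (S : ACS V) : ⟪S.xi, S.xi⟫ = 1 := by
  rw [← S.eta_eq, S.eta_xi]

lemma ACS.phi_xi (S : ACS V) : S.phi S.xi = 0 := by
  have h := S.metric S.xi S.xi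
  rw [S.inner_xi_xi, S.eta_xi] at h
  simpa [inner_self_eq_zero] using h

lemma ACS.xi_ne (S : ACS V) : S.xi ≠ 0 := by
  intro h
  have := S.eta_xi
  rw [h] at this
  simp at this

lemma ACS.eta_phi (S : ACS V) (X : V) : S.eta (S.phi X) = 0 := by
  have h1 := S.phi_phi (S.phi X)
  rw [show S.phi (S.phi X) = -X + S.eta X • S.xi from S.phi_phi X] at h1
  simp only [map_add, map_neg, map_smul, S.phi_xi, smul_zero, add_zero] at h1
  have : S.eta (S.phi X) • S.xi = 0 := by
    linear_combination (norm := module) h1.symm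
  rcases smul_eq_zero.mp this with h | h
  · exact h
  · exact absurd h S.xi_ne

lemma ACS.inner_phi_xi (S : ACS V) (X : V) : ⟪S.phi X, S.xi⟫ = 0 := by
  rw [← S.eta_eq]; exact S.eta_phi X

lemma ACS.phi_skew (S : ACS V) (X Y : V) : ⟪S.phi X, Y⟫ = -⟪X, S.phi Y⟫ := by
  have h := S.metric X (S.phi Y)
  rw [S.phi_phi Y] at h
  rw [S.eta_eq (S.phi Y), S.inner_phi_xi] at h
  simp only [inner_add_right, inner_neg_right, real_inner_smul_right, S.inner_phi_xi,
    mul_zero, add_zero] at h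
  linarith

lemma trace_eq_sum (b : OrthonormalBasis ι ℝ V) (T : V →ₗ[ℝ] V) :
    LinearMap.trace ℝ V T = ∑ i, ⟪T (b i), b i⟫ := by
  classical
  rw [LinearMap.trace_eq_matrix_trace ℝ b.toBasis, Matrix.trace]
  simp [Matrix.diag, LinearMap.toMatrix_apply, OrthonormalBasis.coe_toBasis_repr_apply,
    OrthonormalBasis.repr_apply_apply, real_inner_comm]

lemma bb_one (b : OrthonormalBasis ι ℝ V) (i : ι) : ⟪b i, b i⟫ = (1:ℝ) := by
  simp [real_inner_self_eq_norm_mul_norm, b.orthonormal.1 i]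

section Sums

variable (S : ACS V) (b : OrthonormalBasis ι ℝ V) (X Y : V)

lemma sumR1 :
    ∑ i, ⟪R1 (b i) X Y, b i⟫ = (Fintype.card ι : ℝ) * ⟪X, Y⟫ - ⟪X, Y⟫ := by
  have e1 : ∀ i, ⟪R1 (b i) X Y, b i⟫ = ⟪X, Y⟫ * ⟪b i, b i⟫ - ⟪X, b i⟫ * ⟪b i, Y⟫ := by
    intro i; simp only [R1, inner_sub_left, real_inner_smul_left]; ring
  rw [Finset.sum_congr rfl fun i _ => e1 i, Finset.sum_sub_distrib,
    b.sum_inner_mul_inner X Y]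
  simp [bb_one b]

lemma sumR2 :
    ∑ i, ⟪S.R2 (b i) X Y, b i⟫ = 3 * (⟪X, Y⟫ - S.eta X * S.eta Y) := by
  have e1 : ∀ i, ⟪S.R2 (b i) X Y, b i⟫
      = ⟪S.phi X, b i⟫ * ⟪b i, S.phi Y⟫ + 2 * (⟪S.phi X, b i⟫ * ⟪b i, S.phi Y⟫) := by
    intro i
    simp only [ACS.R2, inner_add_left, inner_sub_left, real_inner_smul_left]
    have h2 : ⟪S.phi (b i), b i⟫ = (0:ℝ) := by
      have := S.phi_skew (b i) (b i)
      have h3 : ⟪b i, S.phi (b i)⟫ = ⟪S.phi (b i), b i⟫ := real_inner_comm _ _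
      linarith [this, h3.symm ▸ this]
    have h4 : ⟪b i, S.phi Y⟫ = ⟪S.phi Y, b i⟫ := real_inner_comm _ _
    have h5 : ⟪b i, S.phi X⟫ = ⟪S.phi X, b i⟫ := real_inner_comm _ _
    rw [h2]
    ring_nf
    rw [real_inner_comm (S.phi Y) (b i), real_inner_comm (S.phi X) (b i)]
    ring
  rw [Finset.sum_congr rfl fun i _ => e1 i, Finset.sum_add_distrib,
    b.sum_inner_mul_inner (S.phi X) (S.phi Y), ← Finset.mul_sum,
    b.sum_inner_mul_inner (S.phi X) (S.phi Y), S.metric X Y]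
  ring

lemma sumR3 :
    ∑ i, ⟪S.R3 (b i) X Y, b i⟫
      = 2 * (S.eta X * S.eta Y) - (Fintype.card ι : ℝ) * (S.eta X * S.eta Y) - ⟪X, Y⟫ := by
  have e1 : ∀ i, ⟪S.R3 (b i) X Y, b i⟫
      = S.eta Y * (⟪X, b i⟫ * ⟪b i, S.xi⟫) - (S.eta X * S.eta Y) * ⟪b i, b i⟫
        + S.eta X * (⟪S.xi, b i⟫ * ⟪b i, Y⟫) - ⟪X, Y⟫ * (⟪S.xi, b i⟫ * ⟪b i, S.xi⟫) := by
    intro i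
    simp only [ACS.R3, inner_add_left, inner_sub_left, real_inner_smul_left]
    rw [S.eta_eq (b i), real_inner_comm (b i) S.xi]
    ring
  rw [Finset.sum_congr rfl fun i _ => e1 i]
  rw [Finset.sum_sub_distrib, Finset.sum_add_distrib, Finset.sum_sub_distrib]
  rw [← Finset.mul_sum, ← Finset.mul_sum, ← Finset.mul_sum, ← Finset.mul_sum]
  rw [b.sum_inner_mul_inner X S.xi, b.sum_inner_mul_inner S.xi Y,
    b.sum_inner_mul_inner S.xi S.xi, S.inner_xi_xi]
  rw [← S.eta_eq X, show ⟪S.xi, Y⟫ = S.eta Y by rw [S.eta_eq Y, real_inner_comm]]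
  simp [bb_one b]
  ring

end Sums


section Sums2

variable (S : ACS V) (hsymh : ∀ X Y : V, ⟪S.h X, Y⟫ = ⟪X, S.h Y⟫)
  (hanti : ∀ X : V, S.h (S.phi X) + S.phi (S.h X) = 0)
  (hxi : S.h S.xi = 0)
  (b : OrthonormalBasis ι ℝ V) (X Y : V)
  (htr : ∑ i, ⟪S.h (b i), b i⟫ = (0:ℝ))
  (htrp : ∑ i, ⟪S.phi (S.h (b i)), b i⟫ = (0:ℝ))

include hsymh hanti hxi

omit hxi in
lemma phih_symm : ∀ A B : V, ⟪S.phi (S.h A), B⟫ = ⟪A, S.phi (S.h B)⟫ := by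
  intro A B
  have hB : S.h (S.phi B) = -(S.phi (S.h B)) := eq_neg_of_add_eq_zero_left (hanti B)
  rw [S.phi_skew (S.h A) B, hsymh A (S.phi B), hB, inner_neg_right, neg_neg]

omit hanti in
lemma inner_h_xi : ∀ A : V, ⟪S.h A, S.xi⟫ = 0 := by
  intro A
  rw [hsymh, hxi, inner_zero_right]

lemma inner_phih_phih (A B : V) : ⟪S.phi (S.h A), S.phi (S.h B)⟫ = ⟪S.h A, S.h B⟫ := by
  rw [S.metric, S.eta_eq, S.eta_eq, inner_h_xi S hsymh hxi A, inner_h_xi S hsymh hxi B]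
  ring

include htr htrp

lemma sumR4 : ∑ i, ⟪S.R4 (b i) X Y, b i⟫ = 0 := by
  have e1 : ∀ i, ⟪S.R4 (b i) X Y, b i⟫
      = ⟪S.h X, Y⟫ * ⟪S.h (b i), b i⟫ - ⟪S.h X, b i⟫ * ⟪b i, S.h Y⟫
        + ⟪S.phi (S.h X), b i⟫ * ⟪b i, S.phi (S.h Y)⟫
        - ⟪S.phi (S.h X), Y⟫ * ⟪S.phi (S.h (b i)), b i⟫ := by
    intro i
    simp only [ACS.R4, inner_add_left, inner_sub_left, real_inner_smul_left]
    rw [show ⟪S.h (b i), Y⟫ = ⟪b i, S.h Y⟫ from hsymh _ _,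
      show ⟪S.phi (S.h (b i)), Y⟫ = ⟪b i, S.phi (S.h Y)⟫ from phih_symm S hsymh hanti _ _]
    ring
  rw [Finset.sum_congr rfl fun i _ => e1 i, Finset.sum_sub_distrib, Finset.sum_add_distrib,
    Finset.sum_sub_distrib, ← Finset.mul_sum, ← Finset.mul_sum, htr, htrp,
    b.sum_inner_mul_inner (S.h X) (S.h Y),
    b.sum_inner_mul_inner (S.phi (S.h X)) (S.phi (S.h Y)),
    inner_phih_phih S hsymh hanti hxi X Y]
  ring

omit htrp in
lemma sumR5 :
    ∑ i, ⟪S.R5 (b i) X Y, b i⟫ = (Fintype.card ι : ℝ) * ⟪S.h X, Y⟫ - 2 * ⟪S.h X, Y⟫ := by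
  have e1 : ∀ i, ⟪S.R5 (b i) X Y, b i⟫
      = ⟪X, Y⟫ * ⟪S.h (b i), b i⟫ - ⟪S.h X, b i⟫ * ⟪b i, Y⟫
        + ⟪S.h X, Y⟫ * ⟪b i, b i⟫ - ⟪X, b i⟫ * ⟪b i, S.h Y⟫ := by
    intro i
    simp only [ACS.R5, inner_add_left, inner_sub_left, real_inner_smul_left]
    rw [show ⟪S.h (b i), Y⟫ = ⟪b i, S.h Y⟫ from hsymh _ _]
    ring
  rw [Finset.sum_congr rfl fun i _ => e1 i, Finset.sum_sub_distrib, Finset.sum_add_distrib,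
    Finset.sum_sub_distrib, ← Finset.mul_sum, htr,
    b.sum_inner_mul_inner (S.h X) Y, b.sum_inner_mul_inner X (S.h Y),
    show ⟪X, S.h Y⟫ = ⟪S.h X, Y⟫ from (hsymh X Y).symm]
  simp only [bb_one b, Finset.sum_const, nsmul_eq_mul, mul_one, Finset.card_univ]
  ring

omit htrp in
lemma sumR6 : ∑ i, ⟪S.R6 (b i) X Y, b i⟫ = -⟪S.h X, Y⟫ := by
  have e1 : ∀ i, ⟪S.R6 (b i) X Y, b i⟫
      = S.eta Y * (⟪S.h X, b i⟫ * ⟪b i, S.xi⟫) - (S.eta X * S.eta Y) * ⟪S.h (b i), b i⟫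
        + S.eta X * (⟪S.xi, b i⟫ * ⟪b i, S.h Y⟫)
        - ⟪S.h X, Y⟫ * (⟪S.xi, b i⟫ * ⟪b i, S.xi⟫) := by
    intro i
    simp only [ACS.R6, inner_add_left, inner_sub_left, real_inner_smul_left]
    rw [show ⟪S.h (b i), Y⟫ = ⟪b i, S.h Y⟫ from hsymh _ _,
      S.eta_eq (b i), real_inner_comm (b i) S.xi]
    ring
  rw [Finset.sum_congr rfl fun i _ => e1 i, Finset.sum_sub_distrib, Finset.sum_add_distrib,
    Finset.sum_sub_distrib, ← Finset.mul_sum, ← Finset.mul_sum, ← Finset.mul_sum,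
    ← Finset.mul_sum, htr,
    b.sum_inner_mul_inner (S.h X) S.xi, b.sum_inner_mul_inner S.xi (S.h Y),
    b.sum_inner_mul_inner S.xi S.xi, S.inner_xi_xi, inner_h_xi S hsymh hxi X,
    show ⟪S.xi, S.h Y⟫ = (0:ℝ) by rw [real_inner_comm]; exact inner_h_xi S hsymh hxi Y]
  ring

omit htr in
lemma sumR7 :
    ∑ i, ⟪S.R7 (b i) X Y, b i⟫
      = (Fintype.card ι : ℝ) * ⟪S.phi (S.h X), Y⟫ - 2 * ⟪S.phi (S.h X), Y⟫ := by
  have e1 : ∀ i, ⟪S.R7 (b i) X Y, b i⟫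
      = ⟪X, Y⟫ * ⟪S.phi (S.h (b i)), b i⟫ - ⟪S.phi (S.h X), b i⟫ * ⟪b i, Y⟫
        + ⟪S.phi (S.h X), Y⟫ * ⟪b i, b i⟫ - ⟪X, b i⟫ * ⟪b i, S.phi (S.h Y)⟫ := by
    intro i
    simp only [ACS.R7, inner_add_left, inner_sub_left, real_inner_smul_left]
    rw [show ⟪S.phi (S.h (b i)), Y⟫ = ⟪b i, S.phi (S.h Y)⟫ from phih_symm S hsymh hanti _ _]
    ring
  rw [Finset.sum_congr rfl fun i _ => e1 i, Finset.sum_sub_distrib, Finset.sum_add_distrib,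
    Finset.sum_sub_distrib, ← Finset.mul_sum, htrp,
    b.sum_inner_mul_inner (S.phi (S.h X)) Y, b.sum_inner_mul_inner X (S.phi (S.h Y)),
    show ⟪X, S.phi (S.h Y)⟫ = ⟪S.phi (S.h X), Y⟫ from (phih_symm S hsymh hanti X Y).symm]
  simp only [bb_one b, Finset.sum_const, nsmul_eq_mul, mul_one, Finset.card_univ]
  ring

omit htr in
lemma sumR8 : ∑ i, ⟪S.R8 (b i) X Y, b i⟫ = -⟪S.phi (S.h X), Y⟫ := by
  have e1 : ∀ i, ⟪S.R8 (b i) X Y, b i⟫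
      = S.eta Y * (⟪S.phi (S.h X), b i⟫ * ⟪b i, S.xi⟫)
        - (S.eta X * S.eta Y) * ⟪S.phi (S.h (b i)), b i⟫
        + S.eta X * (⟪S.xi, b i⟫ * ⟪b i, S.phi (S.h Y)⟫)
        - ⟪S.phi (S.h X), Y⟫ * (⟪S.xi, b i⟫ * ⟪b i, S.xi⟫) := by
    intro i
    simp only [ACS.R8, inner_add_left, inner_sub_left, real_inner_smul_left]
    rw [show ⟪S.phi (S.h (b i)), Y⟫ = ⟪b i, S.phi (S.h Y)⟫ from phih_symm S hsymh hanti _ _,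
      S.eta_eq (b i), real_inner_comm (b i) S.xi]
    ring
  rw [Finset.sum_congr rfl fun i _ => e1 i, Finset.sum_sub_distrib, Finset.sum_add_distrib,
    Finset.sum_sub_distrib, ← Finset.mul_sum, ← Finset.mul_sum, ← Finset.mul_sum,
    ← Finset.mul_sum, htrp,
    b.sum_inner_mul_inner (S.phi (S.h X)) S.xi, b.sum_inner_mul_inner S.xi (S.phi (S.h Y)),
    b.sum_inner_mul_inner S.xi S.xi, S.inner_xi_xi, S.inner_phi_xi (S.h X),
    show ⟪S.xi, S.phi (S.h Y)⟫ = (0:ℝ) by rw [real_inner_comm]; exact S.inner_phi_xi (S.h Y)]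
  ring

end Sums2

lemma Qform (S : ACS V) (hsymh : ∀ X Y : V, ⟪S.h X, Y⟫ = ⟪X, S.h Y⟫)
    (hanti : ∀ X : V, S.h (S.phi X) + S.phi (S.h X) = 0)
    (hxi : S.h S.xi = 0)
    (b : OrthonormalBasis ι ℝ V)
    (htr : ∑ i, ⟪S.h (b i), b i⟫ = (0:ℝ))
    (htrp : ∑ i, ⟪S.phi (S.h (b i)), b i⟫ = (0:ℝ))
    (R : V → V → V → V) (f₁ f₂ f₃ f₄ f₅ f₆ f₇ f₈ : ℝ)
    (hR : ∀ X Y Z : V, R X Y Z =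
      f₁ • R1 X Y Z + f₂ • S.R2 X Y Z + f₃ • S.R3 X Y Z + f₄ • S.R4 X Y Z
        + f₅ • S.R5 X Y Z + f₆ • S.R6 X Y Z + f₇ • S.R7 X Y Z + f₈ • S.R8 X Y Z)
    (Q : V →ₗ[ℝ] V) (hQ : IsRicci b R Q) :
    ∀ X : V, Q X = (((Fintype.card ι : ℝ) - 1) * f₁ + 3 * f₂ - f₃) • X
      - ((3 * f₂ + ((Fintype.card ι : ℝ) - 2) * f₃) * S.eta X) • S.xi
      + (((Fintype.card ι : ℝ) - 2) * f₅ - f₆) • S.h X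
      + (((Fintype.card ι : ℝ) - 2) * f₇ - f₈) • S.phi (S.h X) := by
  intro X
  apply ext_inner_right ℝ
  intro Y
  rw [hQ X Y]
  have expand : ∀ i, ⟪R (b i) X Y, b i⟫
      = f₁ * ⟪R1 (b i) X Y, b i⟫ + f₂ * ⟪S.R2 (b i) X Y, b i⟫ + f₃ * ⟪S.R3 (b i) X Y, b i⟫
        + f₄ * ⟪S.R4 (b i) X Y, b i⟫ + f₅ * ⟪S.R5 (b i) X Y, b i⟫
        + f₆ * ⟪S.R6 (b i) X Y, b i⟫ + f₇ * ⟪S.R7 (b i) X Y, b i⟫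
        + f₈ * ⟪S.R8 (b i) X Y, b i⟫ := by
    intro i
    rw [hR]
    simp only [inner_add_left, real_inner_smul_left]
  rw [Finset.sum_congr rfl fun i _ => expand i]
  rw [Finset.sum_add_distrib, Finset.sum_add_distrib, Finset.sum_add_distrib,
    Finset.sum_add_distrib, Finset.sum_add_distrib, Finset.sum_add_distrib,
    Finset.sum_add_distrib, ← Finset.mul_sum, ← Finset.mul_sum, ← Finset.mul_sum,
    ← Finset.mul_sum, ← Finset.mul_sum, ← Finset.mul_sum, ← Finset.mul_sum, ← Finset.mul_sum]
  rw [sumR1 b X Y, sumR2 S b X Y, sumR3 S b X Y,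
    sumR4 S hsymh hanti hxi b X Y htr htrp,
    sumR5 S hsymh hanti hxi b X Y htr,
    sumR6 S hsymh hanti hxi b X Y htr,
    sumR7 S hsymh hanti hxi b X Y htrp,
    sumR8 S hsymh hanti hxi b X Y htrp]
  simp only [inner_add_left, inner_sub_left, real_inner_smul_left]
  rw [show ⟪S.xi, Y⟫ = S.eta Y by rw [S.eta_eq, real_inner_comm]]
  ring

end Aux

/-- On a generalized `(κ,μ,ν)`-space form with `h ≠ 0`, `h` symmetric and
`hφ + φh = 0`, the Weyl tensor satisfies
`W(X,ξ)ξ = (2(1−n)/(2n−1))(f₆hX + f₈φhX)` for every `X ⟂ ξ`. -/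
theorem statement15 (n : ℕ) (hn : 1 ≤ n) (S : ACS V)
    (hne : S.h ≠ 0) (hsymh : ∀ X Y : V, ⟪S.h X, Y⟫ = ⟪X, S.h Y⟫)
    (hanti : ∀ X : V, S.h (S.phi X) + S.phi (S.h X) = 0)
    (hxi : S.h S.xi = 0) (htrh : LinearMap.trace ℝ V S.h = 0)
    (htrph : LinearMap.trace ℝ V (S.phi ∘ₗ S.h) = 0)
    (b : OrthonormalBasis (Fin (2 * n + 1)) ℝ V)
    (R : V → V → V → V) (f₁ f₂ f₃ f₄ f₅ f₆ f₇ f₈ : ℝ)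
    (hR : ∀ X Y Z : V, R X Y Z =
      f₁ • R1 X Y Z + f₂ • S.R2 X Y Z + f₃ • S.R3 X Y Z + f₄ • S.R4 X Y Z
        + f₅ • S.R5 X Y Z + f₆ • S.R6 X Y Z + f₇ • S.R7 X Y Z + f₈ • S.R8 X Y Z)
    (Q : V →ₗ[ℝ] V) (hQ : IsRicci b R Q)
    (τ : ℝ) (hτ : τ = ∑ i, ⟪Q (b i), b i⟫)
    (L : V →ₗ[ℝ] V)
    (hL : ∀ X : V, L X = -(1 / (2 * (n : ℝ) - 1)) • Q X
      + (τ / (4 * (n : ℝ) * (2 * (n : ℝ) - 1))) • X)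
    (W : V → V → V → V)
    (hW : ∀ X Y Z : V, W X Y Z = R X Y Z
      - (⟪L X, Z⟫ • Y - ⟪L Y, Z⟫ • X + ⟪X, Z⟫ • L Y - ⟪Y, Z⟫ • L X)) :
    ∀ X : V, ⟪X, S.xi⟫ = 0 →
      W X S.xi S.xi =
        (2 * (1 - (n : ℝ)) / (2 * (n : ℝ) - 1)) • (f₆ • S.h X + f₈ • S.phi (S.h X)) := by
  intro X hXxi
  have hetaX : S.eta X = 0 := by rw [S.eta_eq]; exact hXxi
  have htr : ∑ i, ⟪S.h (b i), b i⟫ = (0:ℝ) := by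
    rw [← trace_eq_sum b S.h]; exact htrh
  have htrp' : ∑ i, ⟪S.phi (S.h (b i)), b i⟫ = (0:ℝ) := by
    have h2 := trace_eq_sum b (S.phi ∘ₗ S.h)
    rw [htrph] at h2
    simpa using h2.symm
  have hm : (Fintype.card (Fin (2 * n + 1)) : ℝ) = 2 * (n:ℝ) + 1 := by
    rw [Fintype.card_fin]; push_cast; ring
  have hn1 : (2 * (n:ℝ) - 1) ≠ 0 := by
    have : (1:ℝ) ≤ (n:ℝ) := by exact_mod_cast hn
    intro h; linarith
  have hn0 : (n:ℝ) ≠ 0 := by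
    have : (1:ℝ) ≤ (n:ℝ) := by exact_mod_cast hn
    intro h; linarith
  have hQf := Qform S hsymh hanti hxi b htr htrp' R f₁ f₂ f₃ f₄ f₅ f₆ f₇ f₈ hR Q hQ
  have f_hX : ⟪S.h X, S.xi⟫ = (0:ℝ) := inner_h_xi S hsymh hxi X
  have f_phX : ⟪S.phi (S.h X), S.xi⟫ = (0:ℝ) := S.inner_phi_xi _
  have f_hxi2 : S.phi (S.h S.xi) = 0 := by rw [hxi, map_zero]
  have hQX : Q X = (2 * (n:ℝ) * f₁ + 3 * f₂ - f₃) • X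
      + ((2 * (n:ℝ) - 1) * f₅ - f₆) • S.h X
      + ((2 * (n:ℝ) - 1) * f₇ - f₈) • S.phi (S.h X) := by
    rw [hQf X, hm, hetaX]
    match_scalars <;> ring
  have hQxi : Q S.xi = (2 * (n:ℝ) * f₁ - 2 * (n:ℝ) * f₃) • S.xi := by
    rw [hQf S.xi, hm, S.eta_xi, hxi]
    simp only [map_zero, smul_zero, add_zero]
    match_scalars <;> ring
  have hτval : τ = (2 * (n:ℝ) + 1) * (2 * (n:ℝ) * f₁ + 3 * f₂ - f₃)
      - (3 * f₂ + (2 * (n:ℝ) - 1) * f₃) := by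
    rw [hτ]
    have e : ∀ i, ⟪Q (b i), b i⟫
        = (((Fintype.card (Fin (2*n+1)) : ℝ) - 1) * f₁ + 3 * f₂ - f₃) * ⟪b i, b i⟫
          - ((3 * f₂ + ((Fintype.card (Fin (2*n+1)) : ℝ) - 2) * f₃)
              * (⟪S.xi, b i⟫ * ⟪b i, S.xi⟫))
          + (((Fintype.card (Fin (2*n+1)) : ℝ) - 2) * f₅ - f₆) * ⟪S.h (b i), b i⟫
          + (((Fintype.card (Fin (2*n+1)) : ℝ) - 2) * f₇ - f₈) * ⟪S.phi (S.h (b i)), b i⟫ := by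
      intro i
      rw [hQf (b i)]
      simp only [inner_add_left, inner_sub_left, real_inner_smul_left]
      rw [S.eta_eq (b i), real_inner_comm (b i) S.xi]
      ring
    rw [Finset.sum_congr rfl fun i _ => e i, Finset.sum_add_distrib, Finset.sum_add_distrib,
      Finset.sum_sub_distrib, ← Finset.mul_sum, ← Finset.mul_sum, ← Finset.mul_sum,
      ← Finset.mul_sum, b.sum_inner_mul_inner S.xi S.xi, S.inner_xi_xi, htr, htrp']
    simp only [bb_one b, Finset.sum_const, nsmul_eq_mul, mul_one, Finset.card_univ]
    rw [hm]
    ring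
  have hRX : R X S.xi S.xi = (f₁ - f₃) • X + (f₅ - f₆) • S.h X
      + (f₇ - f₈) • S.phi (S.h X) := by
    rw [hR]
    simp only [R1, ACS.R2, ACS.R3, ACS.R4, ACS.R5, ACS.R6, ACS.R7, ACS.R8,
      hetaX, S.eta_xi, S.phi_xi, hxi, f_hxi2, map_zero, hXxi, S.inner_xi_xi,
      f_hX, f_phX, inner_zero_left, inner_zero_right, smul_zero, zero_smul,
      add_zero, zero_add, sub_zero, zero_sub, mul_zero, zero_mul, mul_one, one_mul,
      neg_zero, neg_neg, smul_neg]
    module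
  rw [hW, hRX, hL X, hL S.xi, hQX, hQxi]
  simp only [inner_add_left, inner_sub_left, inner_neg_left, real_inner_smul_left,
    hXxi, f_hX, f_phX, S.inner_xi_xi, mul_zero, zero_mul, add_zero, zero_add, mul_one,
    smul_zero, zero_smul, neg_zero]
  rw [hτval]
  match_scalars <;> field_simp <;> ring


end KMNSpaceForm
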